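/- For k ≥ 1, the singular locus of Z(g[k]) ⊆ ℙ³(ℂ) is contained in the union of the four coordinate points p_i = [δ_{i1};δ_{i2};δ_{i3};δ_{i4}] and the sets σ_k⁻¹(Z_{i,j}) for i ≠ j, where Z_{i,j} is the common zero set of g, ∂g/∂x_i, ∂g/∂x_j. -/
import Mathlib

open MvPolynomial

lemma chain_pow (k : ℕ) (i : Fin 4) (g : MvPolynomial (Fin 4) ℂ) :
    pderiv i (aeval (fun j => (X j : MvPolynomial (Fin 4) ℂ) ^ k) g)
      = (k : MvPolynomial (Fin 4) ℂ) * X i ^ (k - 1) *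
        aeval (fun j => (X j : MvPolynomial (Fin 4) ℂ) ^ k) (pderiv i g) := by
  induction g using MvPolynomial.induction_on with
  | C a => simp
  | add p q hp hq => simp only [map_add, hp, hq]; ring
  | mul_X p j hp =>
    by_cases h : j = i
    · subst h
      simp only [map_mul, aeval_X, pderiv_mul, pderiv_pow, pderiv_X_self, map_add, hp, mul_one]
      ring
    · simp only [map_mul, aeval_X, pderiv_mul, pderiv_pow, pderiv_X_of_ne h, map_add, hp,
        mul_zero, zero_mul, add_zero, zero_add]
      ring

lemma eval_aeval_pow (k : ℕ) (v : Fin 4 → ℂ) (g : MvPolynomial (Fin 4) ℂ) :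
    eval v (aeval (fun j => (X j : MvPolynomial (Fin 4) ℂ) ^ k) g)
      = eval (fun l => v l ^ k) g := by
  rw [aeval_def, algebraMap_eq, ← eval_assoc,
    show (⇑(eval v) ∘ fun j => (X j : MvPolynomial (Fin 4) ℂ) ^ k) = fun l => v l ^ k from
      funext fun l => by simp]

/-- The singular locus of `Z(g[k])` is contained in the union of the four coordinate
points and the preimages under `σ_k` of the loci `Z_{i,j}` where `g`, `∂g/∂x_i` and
`∂g/∂x_j` vanish simultaneously (`i ≠ j`). Stated on nonzero representative vectors. -/
theorem singular_locus_subst_pow (k : ℕ) (hk : 1 ≤ k) (d : ℕ)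
    (g : MvPolynomial (Fin 4) ℂ) (hg : g.IsHomogeneous d)
    (v : Fin 4 → ℂ) (hv : v ≠ 0)
    (hzero : eval v (aeval (fun j => (X j : MvPolynomial (Fin 4) ℂ) ^ k) g) = 0)
    (hsing : ∀ i : Fin 4,
      eval v (pderiv i (aeval (fun j => (X j : MvPolynomial (Fin 4) ℂ) ^ k) g)) = 0) :
    (∃ i : Fin 4, ∀ j : Fin 4, j ≠ i → v j = 0) ∨
    (∃ i j : Fin 4, i ≠ j ∧
      eval (fun l => v l ^ k) g = 0 ∧
      eval (fun l => v l ^ k) (pderiv i g) = 0 ∧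
      eval (fun l => v l ^ k) (pderiv j g) = 0) := by
  have hz : eval (fun l => v l ^ k) g = 0 := by rw [← eval_aeval_pow]; exact hzero
  have hd : ∀ i, v i ≠ 0 → eval (fun l => v l ^ k) (pderiv i g) = 0 := by
    intro i hvi
    have h := hsing i
    rw [chain_pow, map_mul, map_mul, eval_aeval_pow] at h
    have hk0 : (k : ℂ) ≠ 0 := Nat.cast_ne_zero.mpr (by omega)
    have hpow : eval v ((X i : MvPolynomial (Fin 4) ℂ) ^ (k - 1)) ≠ 0 := by
      simpa using pow_ne_zero (k - 1) hvi
    have hkk : eval v ((k : MvPolynomial (Fin 4) ℂ)) ≠ 0 := by simpa using hk0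
    rcases mul_eq_zero.mp h with h1 | h1
    · rcases mul_eq_zero.mp h1 with h2 | h2
      · exact absurd h2 hkk
      · exact absurd h2 hpow
    · exact h1
  by_cases h : ∃ i j : Fin 4, i ≠ j ∧ v i ≠ 0 ∧ v j ≠ 0
  · obtain ⟨i, j, hij, hi, hj⟩ := h
    exact Or.inr ⟨i, j, hij, hz, hd i hi, hd j hj⟩
  · push_neg at h
    obtain ⟨i, hi⟩ := Function.ne_iff.mp hv
    refine Or.inl ⟨i, fun j hji => ?_⟩
    by_contra hj
    exact hi (h j i hji hj)
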